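/- Let b : ℕ → ℂ with b 0 ≠ 0, m ≥ 1, and let α_k (for 0 ≤ k ≤ m-1) be the auxiliary sequences defined by the initial value table (α_k(n) = δ_{k,n} for n < m, α_k(m) = (δ_{k,0} - b(m-k))/b 0) and recurrence α_k(n) = (α_k(n-m) - ∑_{j=0}^{n-1} b (n-j) α_k(j))/b 0 for n > m. Then as formal power series, Gα_k(s) · (B(s) - s^m) = ∑_{n=k}^{m-1} b (n-k) s^n, where Gα_k(s) = ∑_{n≥0} α_k(n) s^n and B(s) = ∑_{n≥0} b n s^n. -/

import Mathlib

/-!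
Compare coefficients. Multiplying by `X ^ m` shifts coefficients up by `m`, so the coefficient
of `s ^ n` on the left is `[s ^ n] (Gα_k · B) - α_k (n - m)` for `n ≥ m` and `[s ^ n] (Gα_k · B)`
for `n < m`. The recurrence (and, at `n = m`, the initial value) says precisely that
`[s ^ n] (Gα_k · B) = α_k (n - m)` for `n ≥ m`; below `m` the sequence `α_k` is the indicator of
`k`, so `[s ^ n] (Gα_k · B) = b (n - k)` for `k ≤ n < m` and `0` otherwise.
-/

open PowerSeries

namespace PowerSeries

variable {R : Type*} [CommRing R]

theorem coeff_mk_mul_mk (a b : ℕ → R) (n : ℕ) :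
    coeff n (mk a * mk b) = ∑ j ∈ Finset.range (n + 1), a j * b (n - j) := by
  rw [coeff_mul,
    Finset.Nat.sum_antidiagonal_eq_sum_range_succ fun i j => coeff i (mk a) * coeff j (mk b)]
  simp only [coeff_mk]

theorem coeff_mul_sub_X_pow (f g : R⟦X⟧) (m n : ℕ) :
    coeff n (f * (g - X ^ m)) = coeff n (f * g) - if m ≤ n then coeff (n - m) f else 0 := by
  rw [mul_sub, map_sub, coeff_mul_X_pow']

theorem coeff_sum_C_mul_X_pow (c : ℕ → R) (s : Finset ℕ) (n : ℕ) :
    coeff n (∑ i ∈ s, C (c i) * X ^ i) = if n ∈ s then c n else 0 := by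
  simp only [map_sum, coeff_C_mul_X_pow, Finset.sum_ite_eq]

end PowerSeries

section Recurrence

variable {K : Type*} [Field K] {a b : ℕ → K} {k m : ℕ}

theorem coeff_mk_mul_mk_of_lt (hinit : ∀ n < m, a n = if k = n then 1 else 0) {n : ℕ}
    (hn : n < m) : coeff n (mk a * mk b) = if k ≤ n then b (n - k) else 0 := by
  rw [coeff_mk_mul_mk, Finset.sum_congr rfl fun j hj =>
    by rw [hinit j (by rw [Finset.mem_range] at hj; omega), ite_mul, one_mul, zero_mul],
    Finset.sum_ite_eq]
  simp only [Finset.mem_range, Nat.lt_succ_iff]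

theorem coeff_mk_mul_mk_of_le (hb : b 0 ≠ 0) (hk : k < m)
    (hinit : ∀ n < m, a n = if k = n then 1 else 0)
    (ham : a m = ((if k = 0 then 1 else 0) - b (m - k)) / b 0)
    (hrec : ∀ n > m, a n = (a (n - m) - ∑ j ∈ Finset.range n, b (n - j) * a j) / b 0)
    {n : ℕ} (hn : m ≤ n) : coeff n (mk a * mk b) = a (n - m) := by
  have hsplit : coeff n (mk a * mk b) = ∑ j ∈ Finset.range n, b (n - j) * a j + b 0 * a n := by
    rw [coeff_mk_mul_mk, Finset.sum_range_succ, Nat.sub_self]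
    simp only [mul_comm]
  rcases hn.eq_or_lt with rfl | hlt
  · have hbelow : ∑ j ∈ Finset.range m, b (m - j) * a j = b (m - k) := by
      rw [Finset.sum_congr rfl fun j hj =>
        by rw [hinit j (Finset.mem_range.mp hj), mul_ite, mul_one, mul_zero],
        Finset.sum_ite_eq, if_pos (Finset.mem_range.mpr hk)]
    rw [hsplit, hbelow, ham, mul_div_cancel₀ _ hb, Nat.sub_self, hinit 0 (by omega)]
    simp only [eq_comm (a := k), add_sub_cancel]
  · rw [hsplit, hrec n hlt, mul_div_cancel₀ _ hb, add_sub_cancel]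

end Recurrence

theorem stmt_2_general (b : ℕ → ℂ) (hb : b 0 ≠ 0) (m : ℕ)
    (α : ℕ → ℕ → ℂ)
    (hα_init : ∀ k < m, ∀ n < m, α k n = if k = n then 1 else 0)
    (hα_m : ∀ k < m, α k m = ((if k = 0 then 1 else 0) - b (m - k)) / b 0)
    (hα_rec : ∀ k < m, ∀ n > m,
      α k n = (α k (n - m) - ∑ j ∈ Finset.range n, b (n - j) * α k j) / b 0) :
    ∀ k < m,
      PowerSeries.mk (α k) * (PowerSeries.mk b - (PowerSeries.X : ℂ⟦X⟧) ^ m)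
        = ∑ n ∈ Finset.Ico k m, PowerSeries.C (R := ℂ) (b (n - k)) * (PowerSeries.X : ℂ⟦X⟧) ^ n := by
  intro k hk
  ext n
  rw [coeff_mul_sub_X_pow, coeff_sum_C_mul_X_pow]
  simp only [Finset.mem_Ico]
  rcases lt_or_ge n m with hn | hn
  · rw [coeff_mk_mul_mk_of_lt (hα_init k hk) hn, if_neg hn.not_ge, sub_zero]
    simp only [hn, and_true]
  · rw [coeff_mk_mul_mk_of_le hb hk (hα_init k hk) (hα_m k hk) (hα_rec k hk) hn, if_pos hn,
      coeff_mk, sub_self, if_neg (by omega)]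

theorem stmt_2 (b : ℕ → ℂ) (hb : b 0 ≠ 0) (m : ℕ) (hm : 1 ≤ m)
    (α : ℕ → ℕ → ℂ)
    (hα_init : ∀ k < m, ∀ n < m, α k n = if k = n then 1 else 0)
    (hα_m : ∀ k < m, α k m = ((if k = 0 then 1 else 0) - b (m - k)) / b 0)
    (hα_rec : ∀ k < m, ∀ n > m,
      α k n = (α k (n - m) - ∑ j ∈ Finset.range n, b (n - j) * α k j) / b 0) :
    ∀ k < m,
      PowerSeries.mk (α k) * (PowerSeries.mk b - (PowerSeries.X : ℂ⟦X⟧) ^ m)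
        = ∑ n ∈ Finset.Ico k m, PowerSeries.C (R := ℂ) (b (n - k)) * (PowerSeries.X : ℂ⟦X⟧) ^ n :=
  stmt_2_general b hb m α hα_init hα_m hα_rec
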